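/- Let σ be a primitive, aperiodic substitution of size (M,M) with a determining position over a finite alphabet A. Then there exists a constant K > 1 such that for every configuration c ∈ X^σ and every n ∈ ℕ, |L_{n,n}(c)| ≥ K·n². In fact one can take K = 1 + 1/(ρ+1)² where ρ is a recognizability radius for σ. -/

import Mathlib

/-- A configuration: a coloring of `ℤ²` by the alphabet `A`. -/
abbrev Config (A : Type*) := ℤ × ℤ → A

/-- A pattern `p` with (finite) support `D` appears in a configuration `c`:
there is `u ∈ ℤ²` with `p v = c (v - u)` for all `v ∈ D`. -/
def AppearsInConfig {A : Type*} (D : Set (ℤ × ℤ)) (p : ℤ × ℤ → A)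
    (c : Config A) : Prop :=
  ∃ u : ℤ × ℤ, ∀ v ∈ D, p v = c (v - u)

/-- A pattern `p` with support `D` appears in a pattern `q` with support `D'`. -/
def AppearsInPattern {A : Type*} (D : Set (ℤ × ℤ)) (p : ℤ × ℤ → A)
    (D' : Set (ℤ × ℤ)) (q : ℤ × ℤ → A) : Prop :=
  ∃ u : ℤ × ℤ, ∀ v ∈ D, v - u ∈ D' ∧ p v = q (v - u)

/-- A two-dimensional substitution over alphabet `A`. -/
def Subst (A : Type*) := A → ℕ → ℕ → A

/-- Composition of a substitution `σ` of size `(m,n)` with `σ'`. -/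
def compSub {A : Type*} (m n : ℕ) (σ σ' : Subst A) : Subst A :=
  fun a x y => σ (σ' a (x / m) (y / n)) (x % m) (y % n)

/-- The `k`-th iterate of a substitution `σ` of size `(m,n)`. -/
def iterSub {A : Type*} (m n : ℕ) (σ : Subst A) : ℕ → Subst A
  | 0 => fun a _ _ => a
  | k + 1 => compSub m n σ (iterSub m n σ k)

/-- Application of a substitution `σ` of size `(m,n)` to a pattern or
configuration (given as a function on `ℤ²`), by block replacement: the cell at
`u` is replaced by the block `σ(p_u)` with lower-left corner at `(m·u₁, n·u₂)`. -/
def substApply {A : Type*} (m n : ℕ) (σ : Subst A) (p : ℤ × ℤ → A) : ℤ × ℤ → A :=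
  fun v => σ (p (v.1.fdiv m, v.2.fdiv n)) (v.1.fmod m).toNat (v.2.fmod n).toNat

/-- Support of `σ(p)` when `p` has support `D`: the union of the blocks
`m·u + {0,…,m−1} × n·u + {0,…,n−1}` over `u ∈ D`. -/
def blowSupport (m n : ℕ) (D : Set (ℤ × ℤ)) : Set (ℤ × ℤ) :=
  {v | (v.1.fdiv m, v.2.fdiv n) ∈ D}

/-- The pattern `σ^k(a)`, supported on `{0,…,m^k−1} × {0,…,n^k−1}`. -/
def letterPattern {A : Type*} (m n : ℕ) (σ : Subst A) (k : ℕ) (a : A) :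
    ℤ × ℤ → A :=
  fun v => iterSub m n σ k a v.1.toNat v.2.toNat

/-- The support `{0,…,m^k−1} × {0,…,n^k−1}` of `σ^k(a)`. -/
def letterSupport (m n k : ℕ) : Set (ℤ × ℤ) :=
  {v | 0 ≤ v.1 ∧ v.1 < (m : ℤ) ^ k ∧ 0 ≤ v.2 ∧ v.2 < (n : ℤ) ^ k}

/-- The substitutive subshift `X^σ`: configurations all of whose finite
patterns appear in `σ^k(a)` for some letter `a` and some `k`. -/
def Xsub {A : Type*} (m n : ℕ) (σ : Subst A) : Set (Config A) :=
  {c | ∀ D : Set (ℤ × ℤ), D.Finite →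
    ∃ (a : A) (k : ℕ),
      AppearsInPattern D c (letterSupport m n k) (letterPattern m n σ k a)}

/-- `σ` (of size `(m,n)`) is primitive: some power `σ^k` maps every letter to
a block in which every letter appears. -/
def Primitive {A : Type*} (m n : ℕ) (σ : Subst A) : Prop :=
  ∃ k : ℕ, ∀ a b : A, ∃ i j : ℕ,
    i < m ^ k ∧ j < n ^ k ∧ iterSub m n σ k b i j = a


/-- Shift of a configuration by the vector `u`. -/
def shiftC {A : Type*} (u : ℤ × ℤ) (c : Config A) : Config A :=
  fun v => c (v - u)

/-- The square `{0,…,r−1}²` in `ℤ²`. -/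
def sqSet (r : ℕ) : Set (ℤ × ℤ) :=
  {v | 0 ≤ v.1 ∧ v.1 < (r : ℤ) ∧ 0 ≤ v.2 ∧ v.2 < (r : ℤ)}

/-- `(i,j)` is a determining position for `σ`. -/
def DetPos {A : Type*} (σ : Subst A) (i j : ℕ) : Prop :=
  ∀ a b : A, σ a i j = σ b i j → a = b

/-- Unique desubstitution of a pattern by a substitution of size `(m,n)`,
relative to the subshift `Xs`. -/
def UniqueDesub {A : Type*} (m n : ℕ) (τ : Subst A) (Xs : Set (Config A))
    (D : Set (ℤ × ℤ)) (p : ℤ × ℤ → A) : Prop :=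
  (∃ t : ℤ × ℤ, ∃ c ∈ Xs, ∀ v ∈ D, p v = substApply m n τ c (v - t)) ∧
  ∀ t t' : ℤ × ℤ,
    (∃ c ∈ Xs, ∀ v ∈ D, p v = substApply m n τ c (v - t)) →
    (∃ c ∈ Xs, ∀ v ∈ D, p v = substApply m n τ c (v - t')) →
    t.1 % (m : ℤ) = t'.1 % (m : ℤ) ∧ t.2 % (n : ℤ) = t'.2 % (n : ℤ)

/-- The set `L_{m,n}(c)` of `m × n` rectangular patterns appearing in `c`. -/
def langRect {A : Type*} (m n : ℕ) (c : Config A) : Set (Fin m × Fin n → A) :=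
  {p | ∃ u : ℤ × ℤ, ∀ (i : Fin m) (j : Fin n),
    p (i, j) = c (u.1 + (i : ℤ), u.2 + (j : ℤ))}

/-!
By recognizability every `c ∈ X^σ` is a shift of `σ(c₁)` for some `c₁ ∈ X^σ`, and any window of
size at least `ρ` of `c` determines the phase of that shift modulo `M`. Hence the `a × b` windows
of `c` fall into `M²` disjoint phase classes. Inside a class, the letters of `c` at the
determining position read off an `a_r × b_r'` window of `c₁`, and every such window arises; the
sizes satisfy `∑ a_r = a` and `∑ b_r' = b`. So `|L_{a,b}(c)| ≥ ∑ |L_{a_r,b_r'}(c₁)|`, and induction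
from the Kari–Moutot bound `ab + 1` gives `|L_{a,b}(c)| ≥ ab + M^(2(k+1))` as soon as
`a, b ≥ ρ M^k`. Choosing `k` with `(ρ+1) M^k ≤ n < (ρ+1) M^(k+1)` gives
`|L_{n,n}(c)| ≥ n² + (n/(ρ+1))²`.
-/

namespace Set

theorem ncard_image_le_ncard_image_of_factor {X P Q : Type*} [Nonempty X] {s : Set X}
    (f : X → P) (h : X → Q) (hfh : ∀ x ∈ s, ∀ y ∈ s, f x = f y → h x = h y)
    (hf : (f '' s).Finite) : (h '' s).ncard ≤ (f '' s).ncard := by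
  have himage : h '' s = (h ∘ Function.invFunOn f s) '' (f '' s) := by
    rw [← image_comp, Function.comp_assoc]
    refine image_congr fun x hx => ?_
    obtain ⟨hmem, hval⟩ := Function.invFunOn_pos (f := f) ⟨x, hx, rfl⟩
    exact hfh x hx _ hmem hval.symm
  rw [himage]
  exact ncard_image_le hf

theorem ncard_range_eq_sum_ncard_image_fiber {X P R : Type*} [Nonempty X]
    (f : X → P) (κ : X → R) (s : Finset R) (hs : ∀ x, κ x ∈ s)
    (hκ : ∀ x y, f x = f y → κ x = κ y) (hf : (range f).Finite) :
    (range f).ncard = ∑ r ∈ s, (f '' (κ ⁻¹' {r})).ncard := by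
  classical
  set g : P → R := κ ∘ Function.invFun f
  have hg : ∀ x, g (f x) = κ x := fun x => hκ _ _ (Function.invFun_eq ⟨x, rfl⟩)
  have hfiber : ∀ r, f '' (κ ⁻¹' {r}) = ↑(hf.toFinset.filter (g · = r)) := by
    intro r
    ext p
    simp only [mem_image, mem_preimage, mem_singleton_iff, Finset.coe_filter,
      Finite.mem_toFinset, mem_range]
    constructor
    · rintro ⟨x, rfl, rfl⟩
      exact ⟨⟨x, rfl⟩, hg x⟩
    · rintro ⟨⟨x, rfl⟩, rfl⟩
      exact ⟨x, (hg x).symm, rfl⟩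
  rw [ncard_eq_toFinset_card _ hf,
    Finset.card_eq_sum_card_fiberwise (f := g) (t := s) fun p _ => hs _]
  simp only [hfiber, ncard_coe_finset]

end Set

open Finset in
theorem Nat.sum_range_add_div_self (M a : ℕ) (hM : 0 < M) :
    ∑ k ∈ range M, (a + k) / M = a := by
  induction a with
  | zero =>
    exact sum_eq_zero fun k hk => Nat.div_eq_of_lt (by simpa using hk)
  | succ a ih =>
    have hshift := sum_range_succ' (fun k => (a + k) / M) M
    rw [sum_range_succ, ih, Nat.add_div_right a hM, add_zero] at hshift
    simp only [add_right_comm a 1, add_assoc]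
    omega

theorem Nat.exists_mul_pow_le_lt_mul_pow {M q n : ℕ} (hM : 1 < M) (hq : 0 < q) (hn : q ≤ n) :
    ∃ k, q * M ^ k ≤ n ∧ n < q * M ^ (k + 1) := by
  have hnq : n / q ≠ 0 := (Nat.div_pos hn hq).ne'
  refine ⟨Nat.log M (n / q), ?_, ?_⟩
  · exact (Nat.mul_le_mul_left q (Nat.pow_log_le_self M hnq)).trans (Nat.mul_div_le n q)
  · rw [mul_comm]
    exact (Nat.div_lt_iff_lt_mul hq).1 (Nat.lt_pow_succ_log_self hM _)

theorem one_add_one_div_sq_mul_sq_le {K : Type*} [Field K] [LinearOrder K]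
    [IsStrictOrderedRing K] {q n m : K} (hq : 0 < q) (hn : 0 ≤ n) (h : n ≤ q * m) :
    (1 + 1 / q ^ 2) * n ^ 2 ≤ n ^ 2 + m ^ 2 := by
  have hnm : (n / q) ^ 2 ≤ m ^ 2 :=
    pow_le_pow_left₀ (div_nonneg hn hq.le) ((div_le_iff₀' hq).2 h) 2
  calc (1 + 1 / q ^ 2) * n ^ 2 = n ^ 2 + (n / q) ^ 2 := by field_simp
    _ ≤ n ^ 2 + m ^ 2 := by linarith

theorem Int.fdiv_mul_add_eq {m i : ℕ} (hi : i < m) (w : ℤ) :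
    (m * w + i).fdiv m = w ∧ ((m * w + i).fmod m).toNat = i := by
  have hm : (0 : ℤ) ≤ m := Int.natCast_nonneg m
  rw [Int.fdiv_eq_ediv_of_nonneg _ hm, Int.fmod_eq_emod_of_nonneg _ hm, add_comm,
    Int.add_mul_ediv_left _ _ (by omega), Int.add_mul_emod_self_left,
    Int.ediv_eq_zero_of_lt (by positivity) (by omega), Int.emod_eq_of_lt (by positivity) (by omega)]
  simp

theorem substApply_mul_add {A : Type*} {m n i j : ℕ} (σ : Subst A) (p : ℤ × ℤ → A)
    (hi : i < m) (hj : j < n) (w : ℤ × ℤ) :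
    substApply m n σ p (m * w.1 + i, n * w.2 + j) = σ (p w) i j := by
  obtain ⟨h₁, h₁'⟩ := Int.fdiv_mul_add_eq hi w.1
  obtain ⟨h₂, h₂'⟩ := Int.fdiv_mul_add_eq hj w.2
  simp only [substApply, h₁, h₁', h₂, h₂']

theorem two_le_of_mem_Xsub {A : Type*} {M : ℕ} {σ : Subst A} {c : Config A}
    (hc : c ∈ Xsub M M σ) : 2 ≤ M := by
  by_contra! hM
  obtain ⟨_, k, u, hu⟩ := hc {(0, 0), (1, 0)} (Set.toFinite _)
  have hpow : (M : ℤ) ^ k ≤ 1 :=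
    pow_le_one₀ (by positivity) (by exact_mod_cast Nat.le_of_lt_succ hM)
  obtain ⟨⟨h₀, -⟩, -⟩ := hu (0, 0) (by simp)
  obtain ⟨⟨-, h₁, -⟩, -⟩ := hu (1, 0) (by simp)
  simp only [Prod.fst_sub] at h₀ h₁
  omega

def RecognizabilityRadius {A : Type*} (M : ℕ) (σ : Subst A) (ρ : ℕ) : Prop :=
  ∀ (D : Set (ℤ × ℤ)) (p : ℤ × ℤ → A), sqSet ρ ⊆ D →
    (∃ c ∈ Xsub M M σ, AppearsInConfig D p c) → UniqueDesub M M σ (Xsub M M σ) D p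

def window {A : Type*} (a b : ℕ) (c : Config A) (u : ℤ × ℤ) : Fin a × Fin b → A :=
  fun x => c (u.1 + x.1, u.2 + x.2)

theorem langRect_eq_range_window {A : Type*} (a b : ℕ) (c : Config A) :
    langRect a b c = Set.range (window a b c) := by
  ext p
  simp only [langRect, window, Set.mem_ofPred_eq, Set.mem_range, funext_iff, Prod.forall, eq_comm]

section Recognizability

variable {A : Type*} {M ρ : ℕ} {σ : Subst A} {c : Config A}

theorem RecognizabilityRadius.exists_desubst (hρ : RecognizabilityRadius M σ ρ)
    (hc : c ∈ Xsub M M σ) :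
    ∃ t : ℤ × ℤ, ∃ c₁ ∈ Xsub M M σ, ∀ v, c v = substApply M M σ c₁ (v - t) := by
  obtain ⟨t, c₁, hc₁, h⟩ :=
    (hρ Set.univ c (Set.subset_univ _) ⟨c, hc, 0, fun v _ => by rw [sub_zero]⟩).1
  exact ⟨t, c₁, hc₁, fun v => h v trivial⟩

theorem RecognizabilityRadius.modEq_of_window_eq (hρ : RecognizabilityRadius M σ ρ)
    (hc : c ∈ Xsub M M σ) {a b : ℕ} (ha : ρ ≤ a) (hb : ρ ≤ b) {u u' : ℤ × ℤ}
    (h : window a b c u = window a b c u') :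
    u.1 ≡ u'.1 [ZMOD M] ∧ u.2 ≡ u'.2 [ZMOD M] := by
  obtain ⟨t, c₁, hc₁, hdesub⟩ := hρ.exists_desubst hc
  set D : Set (ℤ × ℤ) := {v | 0 ≤ v.1 ∧ v.1 < a ∧ 0 ≤ v.2 ∧ v.2 < b}
  have hsq : sqSet ρ ⊆ D := fun v ⟨h₁, h₂, h₃, h₄⟩ => ⟨h₁, by omega, h₃, by omega⟩
  have hwin : ∀ v ∈ D, c (u + v) = c (u' + v) := by
    rintro v ⟨h₁, h₂, h₃, h₄⟩
    have := congrFun h (⟨v.1.toNat, by omega⟩, ⟨v.2.toNat, by omega⟩)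
    rw [Prod.add_def, Prod.add_def]
    simpa [window, Int.toNat_of_nonneg h₁, Int.toNat_of_nonneg h₃] using this
  have hdesub_at : ∀ w v, c (w + v) = substApply M M σ c₁ (v - (t - w)) := fun w v => by
    rw [hdesub, sub_sub_eq_add_sub, add_comm]
  obtain ⟨h₁, h₂⟩ := (hρ D (fun v => c (u + v)) hsq ⟨c, hc, -u, fun v _ => by
      rw [sub_neg_eq_add, add_comm]⟩).2 (t - u) (t - u')
    ⟨c₁, hc₁, fun v _ => hdesub_at u v⟩ ⟨c₁, hc₁, fun v hv => (hwin v hv).trans (hdesub_at u' v)⟩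
  have cancel : ∀ x y z : ℤ, z - x ≡ z - y [ZMOD M] → x ≡ y [ZMOD M] := fun x y z hxy => by
    simpa using hxy.sub_left z
  exact ⟨cancel _ _ t.1 h₁, cancel _ _ t.2 h₂⟩

end Recognizability

/-- The number of `l : ℕ` with `r + M * l < a`, for `r < M`. -/
def blockCount (M a r : ℕ) : ℕ := (a + (M - 1 - r)) / M

theorem sum_blockCount (M a : ℕ) (hM : 0 < M) :
    ∑ r ∈ Finset.range M, blockCount M a r = a := by
  conv_rhs => rw [← Nat.sum_range_add_div_self M a hM, ← Finset.sum_range_reflect]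
  rfl

theorem div_le_blockCount (M a r : ℕ) : a / M ≤ blockCount M a r :=
  Nat.div_le_div_right (Nat.le_add_right _ _)

theorem add_mul_lt_of_lt_blockCount {M a r l : ℕ} (hr : r < M) (hl : l < blockCount M a r) :
    r + M * l < a := by
  have hM : 0 < M := by omega
  have := (Nat.le_div_iff_mul_le hM).1 (Nat.succ_le_of_lt hl)
  rw [Nat.succ_mul] at this
  rw [mul_comm]
  omega

/-- For a lattice `o + M ℤ²` (the determining positions of `c = σ(c₁)`), the window of `c`
at `u` meets the lattice at the offsets `blockClass M o u + M • (l, m)`, where `c` carries the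
letters of `c₁` at `blockIndex M o u + (l, m)`. -/
def blockClass (M : ℕ) (o u : ℤ × ℤ) : ℕ × ℕ :=
  (((o.1 - u.1) % M).toNat, ((o.2 - u.2) % M).toNat)

def blockIndex (M : ℕ) (o u : ℤ × ℤ) : ℤ × ℤ :=
  (-((o.1 - u.1) / M), -((o.2 - u.2) / M))

section Blocks

variable {M : ℕ} {o : ℤ × ℤ}

theorem blockClass_lt (hM : 0 < M) (o u : ℤ × ℤ) :
    (blockClass M o u).1 < M ∧ (blockClass M o u).2 < M := by
  have h₁ := Int.emod_lt_of_pos (o.1 - u.1) (Int.natCast_pos.2 hM)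
  have h₂ := Int.emod_lt_of_pos (o.2 - u.2) (Int.natCast_pos.2 hM)
  simp only [blockClass]
  omega

theorem blockClass_eq_of_modEq {u u' : ℤ × ℤ} (h₁ : u.1 ≡ u'.1 [ZMOD M])
    (h₂ : u.2 ≡ u'.2 [ZMOD M]) : blockClass M o u = blockClass M o u' := by
  simp only [blockClass, (h₁.sub_left o.1).eq, (h₂.sub_left o.2).eq]

theorem exists_blockClass_blockIndex_eq (hM : 0 < M) (o : ℤ × ℤ) {r : ℕ × ℕ}
    (hr₁ : r.1 < M) (hr₂ : r.2 < M) (z : ℤ × ℤ) :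
    ∃ u, blockClass M o u = r ∧ blockIndex M o u = z := by
  have hdiv : ∀ s : ℕ, s < M → ∀ w : ℤ, (s + M * -w) / (M : ℤ) = -w ∧ (s + M * -w) % (M : ℤ) = s :=
    fun s hs w => by
      rw [Int.add_mul_ediv_left _ _ (by omega), Int.add_mul_emod_self_left,
        Int.ediv_eq_zero_of_lt (by positivity) (by omega),
        Int.emod_eq_of_lt (by positivity) (by omega), zero_add]
      exact ⟨rfl, rfl⟩
  refine ⟨(o.1 - (r.1 + M * -z.1), o.2 - (r.2 + M * -z.2)), ?_, ?_⟩ <;>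
    simp only [blockClass, blockIndex, sub_sub_cancel, (hdiv _ hr₁ _).1, (hdiv _ hr₁ _).2,
      (hdiv _ hr₂ _).1, (hdiv _ hr₂ _).2, Int.toNat_natCast, neg_neg]

theorem apply_add_blockClass {A : Type*} {σ : Subst A} {c c₁ : Config A} {t : ℤ × ℤ}
    (hdesub : ∀ v, c v = substApply M M σ c₁ (v - t)) {i j : ℕ} (hi : i < M) (hj : j < M)
    (u : ℤ × ℤ) (l m : ℕ) :
    c (u.1 + ((blockClass M (t.1 + i, t.2 + j) u).1 + M * l : ℕ),
        u.2 + ((blockClass M (t.1 + i, t.2 + j) u).2 + M * m : ℕ)) =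
      σ (c₁ (blockIndex M (t.1 + i, t.2 + j) u + ((l : ℤ), (m : ℤ)))) i j := by
  have hM : (0 : ℤ) < M := by omega
  rw [hdesub, ← substApply_mul_add σ c₁ hi hj]
  have hres : ∀ d : ℤ, (((d % M).toNat : ℕ) : ℤ) = d - M * (d / M) := fun d => by
    rw [Int.toNat_of_nonneg (Int.emod_nonneg _ hM.ne'), Int.emod_def]
  congr 1
  ext <;> simp only [blockClass, blockIndex, Nat.cast_add, Nat.cast_mul, hres, Prod.fst_sub,
    Prod.snd_sub, Prod.fst_add, Prod.snd_add] <;> ring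

end Blocks

section Desubstitution

variable {A : Type*} {M : ℕ} {σ : Subst A} {c c₁ : Config A} {t : ℤ × ℤ} {i j : ℕ}

theorem ncard_langRect_blockCount_le (hM : 0 < M)
    (hdesub : ∀ v, c v = substApply M M σ c₁ (v - t)) (hi : i < M) (hj : j < M)
    (hdet : DetPos σ i j) {a b : ℕ} (hfin : (langRect a b c).Finite) {r : ℕ × ℕ}
    (hr₁ : r.1 < M) (hr₂ : r.2 < M) :
    (langRect (blockCount M a r.1) (blockCount M b r.2) c₁).ncard ≤
      (window a b c '' (blockClass M (t.1 + i, t.2 + j) ⁻¹' {r})).ncard := by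
  set o : ℤ × ℤ := (t.1 + i, t.2 + j)
  set h := fun u => window (blockCount M a r.1) (blockCount M b r.2) c₁ (blockIndex M o u)
  have hrange : langRect (blockCount M a r.1) (blockCount M b r.2) c₁ =
      h '' (blockClass M o ⁻¹' {r}) := by
    rw [langRect_eq_range_window]
    ext p
    constructor
    · rintro ⟨z, rfl⟩
      obtain ⟨u, hu, rfl⟩ := exists_blockClass_blockIndex_eq hM o hr₁ hr₂ z
      exact ⟨u, hu, rfl⟩
    · rintro ⟨u, -, rfl⟩
      exact ⟨_, rfl⟩
  rw [langRect_eq_range_window] at hfin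
  rw [hrange]
  refine Set.ncard_image_le_ncard_image_of_factor _ h ?_ (hfin.subset (Set.image_subset_range _ _))
  intro u hu u' hu' hwin
  funext ⟨l, m⟩
  apply hdet
  have hread : ∀ v, blockClass M o v = r →
      σ (c₁ (blockIndex M o v + ((l : ℤ), (m : ℤ)))) i j =
        window a b c v (⟨r.1 + M * l, add_mul_lt_of_lt_blockCount hr₁ l.2⟩,
          ⟨r.2 + M * m, add_mul_lt_of_lt_blockCount hr₂ m.2⟩) := by
    rintro v rfl
    exact (apply_add_blockClass hdesub hi hj v l m).symm
  exact (hread u hu).trans ((congrFun hwin _).trans (hread u' hu').symm)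

theorem RecognizabilityRadius.exists_sum_ncard_langRect_blockCount_le {ρ : ℕ}
    (hρ : RecognizabilityRadius M σ ρ) (hM : 0 < M) (hi : i < M) (hj : j < M)
    (hdet : DetPos σ i j) (hc : c ∈ Xsub M M σ) {a b : ℕ} (ha : ρ ≤ a) (hb : ρ ≤ b)
    (hfin : (langRect a b c).Finite) :
    ∃ c₁ ∈ Xsub M M σ, ∑ r ∈ Finset.range M, ∑ r' ∈ Finset.range M,
      (langRect (blockCount M a r) (blockCount M b r') c₁).ncard ≤ (langRect a b c).ncard := by
  obtain ⟨t, c₁, hc₁, hdesub⟩ := hρ.exists_desubst hc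
  refine ⟨c₁, hc₁, ?_⟩
  have hclass : ∀ u, blockClass M (t.1 + i, t.2 + j) u ∈ Finset.range M ×ˢ Finset.range M :=
    fun u => by simpa using blockClass_lt hM _ u
  rw [langRect_eq_range_window a b c, Set.ncard_range_eq_sum_ncard_image_fiber _ _ _ hclass
    (fun u u' h => blockClass_eq_of_modEq (hρ.modEq_of_window_eq hc ha hb h).1
      (hρ.modEq_of_window_eq hc ha hb h).2) (langRect_eq_range_window a b c ▸ hfin),
    Finset.sum_product]
  gcongr with r hr r' hr'
  exact ncard_langRect_blockCount_le hM hdesub hi hj hdet hfin (r := (r, r'))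
    (Finset.mem_range.1 hr) (Finset.mem_range.1 hr')

end Desubstitution

section Counting

variable {A : Type*} {M ρ i j : ℕ} {σ : Subst A}

theorem RecognizabilityRadius.mul_add_le_ncard_langRect (hρ : RecognizabilityRadius M σ ρ)
    (hM : 0 < M) (hi : i < M) (hj : j < M) (hdet : DetPos σ i j) {c : Config A}
    (hc : c ∈ Xsub M M σ) {a b : ℕ} (ha : ρ ≤ a) (hb : ρ ≤ b) (hfin : (langRect a b c).Finite)
    (N : ℕ) (hN : ∀ c₁ ∈ Xsub M M σ, ∀ r < M, ∀ r' < M,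
      blockCount M a r * blockCount M b r' + N ≤
        (langRect (blockCount M a r) (blockCount M b r') c₁).ncard) :
    a * b + M ^ 2 * N ≤ (langRect a b c).ncard := by
  obtain ⟨c₁, hc₁, hsum⟩ :=
    hρ.exists_sum_ncard_langRect_blockCount_le hM hi hj hdet hc ha hb hfin
  calc a * b + M ^ 2 * N
      = ∑ r ∈ Finset.range M, ∑ r' ∈ Finset.range M,
          (blockCount M a r * blockCount M b r' + N) := by
        simp only [Finset.sum_add_distrib, ← Finset.mul_sum, ← Finset.sum_mul,
          sum_blockCount M _ hM, Finset.sum_const, Finset.card_range, smul_eq_mul]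
        ring
    _ ≤ ∑ r ∈ Finset.range M, ∑ r' ∈ Finset.range M,
          (langRect (blockCount M a r) (blockCount M b r') c₁).ncard := by
        gcongr with r hr r' hr'
        exact hN c₁ hc₁ r (Finset.mem_range.1 hr) r' (Finset.mem_range.1 hr')
    _ ≤ (langRect a b c).ncard := hsum

theorem RecognizabilityRadius.mul_add_sq_pow_le_ncard_langRect
    (hρ : RecognizabilityRadius M σ ρ) (hM : 0 < M) (hi : i < M) (hj : j < M)
    (hdet : DetPos σ i j)
    (hKM : ∀ c ∈ Xsub M M σ, ∀ a b : ℕ, a * b + 1 ≤ (langRect a b c).ncard) (k : ℕ) :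
    ∀ a b, ρ * M ^ k ≤ a → ρ * M ^ k ≤ b → ∀ c ∈ Xsub M M σ,
      a * b + (M ^ (k + 1)) ^ 2 ≤ (langRect a b c).ncard := by
  have hfin : ∀ c ∈ Xsub M M σ, ∀ a b, (langRect a b c).Finite := fun c hc a b =>
    Set.finite_of_ncard_pos ((Nat.succ_pos _).trans_le (hKM c hc a b))
  induction k with
  | zero =>
    intro a b ha hb c hc
    simpa using hρ.mul_add_le_ncard_langRect hM hi hj hdet hc (by simpa using ha)
      (by simpa using hb) (hfin c hc a b) 1 fun c₁ hc₁ _ _ _ _ => hKM c₁ hc₁ _ _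
  | succ k ih =>
    intro a b ha hb c hc
    have hblock : ∀ x, ρ * M ^ (k + 1) ≤ x → ρ ≤ x ∧ ∀ r, ρ * M ^ k ≤ blockCount M x r :=
      fun x hx => ⟨(Nat.le_mul_of_pos_right _ (by positivity)).trans hx, fun r =>
        ((Nat.le_div_iff_mul_le hM).2 (by rwa [mul_assoc, ← pow_succ])).trans
          (div_le_blockCount M x r)⟩
    have := hρ.mul_add_le_ncard_langRect hM hi hj hdet hc (hblock a ha).1 (hblock b hb).1
      (hfin c hc a b) _ fun c₁ hc₁ r _ r' _ =>
        ih _ _ ((hblock a ha).2 r) ((hblock b hb).2 r') c₁ hc₁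
    rwa [← mul_pow, ← pow_succ'] at this

end Counting

theorem main_quadratic_lower_bound_general {A : Type*} (M : ℕ) (σ : Subst A)
    (hdet : ∃ i j : ℕ, i < M ∧ j < M ∧ DetPos σ i j)
    (ρ : ℕ)
    (hSolomyak : ∀ (D : Set (ℤ × ℤ)) (p : ℤ × ℤ → A), sqSet ρ ⊆ D →
      (∃ c ∈ Xsub M M σ, AppearsInConfig D p c) →
      UniqueDesub M M σ (Xsub M M σ) D p)
    (hKM : ∀ c ∈ Xsub M M σ, ∀ a b : ℕ,
      a * b + 1 ≤ (langRect a b c).ncard) :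
    ∃ K : ℚ, 1 < K ∧ K = 1 + 1 / ((ρ : ℚ) + 1) ^ 2 ∧
      ∀ c ∈ Xsub M M σ, ∀ n : ℕ,
        K * (n : ℚ) ^ 2 ≤ ((langRect n n c).ncard : ℚ) := by
  obtain ⟨i, j, hi, hj, hdp⟩ := hdet
  have hρ : RecognizabilityRadius M σ ρ := hSolomyak
  refine ⟨_, lt_add_of_pos_right 1 (by positivity), rfl, fun c hc n => ?_⟩
  have hM : 1 < M := two_le_of_mem_Xsub hc
  obtain ⟨m, hnm, hcard⟩ : ∃ m : ℕ, n ≤ (ρ + 1) * m ∧ n * n + m ^ 2 ≤ (langRect n n c).ncard := by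
    rcases le_or_gt n ρ with hn | hn
    · exact ⟨1, by omega, by simpa using hKM c hc n n⟩
    · obtain ⟨k, hk, hk'⟩ := Nat.exists_mul_pow_le_lt_mul_pow hM ρ.succ_pos hn
      have hρk : ρ * M ^ k ≤ n := (Nat.mul_le_mul_right _ ρ.le_succ).trans hk
      exact ⟨M ^ (k + 1), hk'.le,
        hρ.mul_add_sq_pow_le_ncard_langRect (by omega) hi hj hdp hKM k n n hρk hρk c hc⟩
  calc (1 + 1 / ((ρ : ℚ) + 1) ^ 2) * (n : ℚ) ^ 2 ≤ (n : ℚ) ^ 2 + (m : ℚ) ^ 2 :=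
        one_add_one_div_sq_mul_sq_le (by positivity) (by positivity) (by exact_mod_cast hnm)
    _ ≤ ((langRect n n c).ncard : ℚ) := by
        rw [sq (n : ℚ)]
        exact_mod_cast hcard

/-- Main theorem: if `σ` is a primitive aperiodic substitution of size `(M,M)`
with a determining position, then there is a constant `K > 1` — one can take
`K = 1 + 1/(ρ+1)²` for a recognizability radius `ρ` (Solomyak) — such that
every `c ∈ X^σ` satisfies `|L_{n,n}(c)| ≥ K n²` for all `n`.
(Solomyak's recognizability and the Kari–Moutot bound are assumed as
hypotheses.) -/
theorem main_quadratic_lower_bound {A : Type*} (M : ℕ) (hM : 0 < M)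
    (σ : Subst A) (hprim : Primitive M M σ)
    (hdet : ∃ i j : ℕ, i < M ∧ j < M ∧ DetPos σ i j)
    (hne : (Xsub M M σ).Nonempty)
    (haper : ∀ c ∈ Xsub M M σ, ∀ u : ℤ × ℤ, u ≠ 0 → shiftC u c ≠ c)
    (ρ : ℕ) (hρ : 0 < ρ)
    (hSolomyak : ∀ (D : Set (ℤ × ℤ)) (p : ℤ × ℤ → A), sqSet ρ ⊆ D →
      (∃ c ∈ Xsub M M σ, AppearsInConfig D p c) →
      UniqueDesub M M σ (Xsub M M σ) D p)
    (hKM : ∀ c ∈ Xsub M M σ, ∀ a b : ℕ,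
      a * b + 1 ≤ (langRect a b c).ncard) :
    ∃ K : ℚ, 1 < K ∧ K = 1 + 1 / ((ρ : ℚ) + 1) ^ 2 ∧
      ∀ c ∈ Xsub M M σ, ∀ n : ℕ,
        K * (n : ℚ) ^ 2 ≤ ((langRect n n c).ncard : ℚ) :=
  main_quadratic_lower_bound_general M σ hdet ρ hSolomyak hKM
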